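/- arXiv:2206.10308 — 3 statements merged into one kernel-verified Lean document; each statement's English description precedes it below -/
import Mathlib

section
/- Let (P_n)_{n≥0} be a monic OPS with recurrence coefficients (B_n), (C_n), and suppose there exist a, c ∈ ℂ and complex sequences (a_n)_{n≥0}, (b_n)_{n≥0}, (c_n)_{n≥0} with c_0 = 0 such that (a·X − c)·S_q P_n = (a_n·X + b_n)·P_n + c_n·P_{n−1} (as polynomials in ℂ[X]) for all n ≥ 0. Set U_2(X) = (α² − 1)(X² − 1), g_n = b_n + a_n B_n and s_n = c_n + a_n C_n. Then for every n ≥ 2 one has the polynomial identity (a·X − c)·U_2·D_q P_n = r1_n·P_{n+2} + r2_n·P_{n+1} + r3_n·P_n + r4_n·P_{n−1} + r5_n·P_{n−2}, where r1_n = a_{n+1} − α a_n, r2_n = g_{n+1} − α g_n + a_n(B_n − α B_{n+1}), r3_n = s_{n+1} − α s_n + g_n(1 − α)B_n + a_{n−1}C_n − α a_n C_{n+1}, r4_n = (g_{n−1} − α g_n)C_n + s_n(B_n − α B_{n−1}), and r5_n = C_n s_{n−1} − α C_{n−1} s_n. -/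
/-!
Since `U₂(x(z)) = (x₊(z) - x₋(z))² / 4` and `x₊(z) + x₋(z) = 2 α x(z)`, every polynomial `f`
satisfies `U₂ · D_q f = S_q (X f) - α X · S_q f`. For `f = P_n` the three-term recurrence and the
linearity of `S_q` turn this into `U₂ · D_q P_n = S_q P_{n+1} + (B_n - α X) S_q P_n + C_n S_q P_{n-1}`.
Multiplying by `a X - c`, the structure relation rewrites each `(a X - c) S_q P_k` in terms of the
`P_j`, and the recurrence absorbs the remaining factors of `X`. Polynomial identities are checked
on the values `x(z)`, `z ≠ 0`, which cover all of `ℂ`.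
-/

noncomputable section

/-- Real power `q ^ r` (with `q > 0` in applications), coerced into `ℂ`. -/
def rp (q : ℝ) (r : ℝ) : ℂ := ((q ^ r : ℝ) : ℂ)

/-- The lattice point `x(z) = (z + z⁻¹)/2`. -/
def xl (z : ℂ) : ℂ := (z + z⁻¹) / 2

/-- `x₊(z) = (q^{1/2} z + q^{-1/2} z⁻¹)/2`. -/
def xp (q : ℝ) (z : ℂ) : ℂ := (rp q (1/2) * z + rp q (-(1/2)) * z⁻¹) / 2

/-- `x₋(z) = (q^{-1/2} z + q^{1/2} z⁻¹)/2`. -/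
def xm (q : ℝ) (z : ℂ) : ℂ := (rp q (-(1/2)) * z + rp q (1/2) * z⁻¹) / 2

/-- `IsSq q f g` means `g = S_q f`, i.e. `g` satisfies the defining property of the
averaging operator applied to `f`. -/
def IsSq (q : ℝ) (f g : Polynomial ℂ) : Prop :=
  ∀ z : ℂ, z ≠ 0 → Polynomial.eval (xl z) g =
    (Polynomial.eval (xp q z) f + Polynomial.eval (xm q z) f) / 2

/-- `IsDq q f g` means `g = D_q f`, i.e. `g` satisfies the defining property of the
Askey-Wilson operator applied to `f`. -/
def IsDq (q : ℝ) (f g : Polynomial ℂ) : Prop :=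
  ∀ z : ℂ, z ≠ 0 → Polynomial.eval (xl z) g * (xp q z - xm q z) =
    Polynomial.eval (xp q z) f - Polynomial.eval (xm q z) f

/-- `α = (q^{1/2} + q^{-1/2})/2`. -/
def alphaC (q : ℝ) : ℂ := (rp q (1/2) + rp q (-(1/2))) / 2

/-- `α_n = (q^{n/2} + q^{-n/2})/2`. -/
def alphaN (q : ℝ) (n : ℕ) : ℂ := (rp q ((n : ℝ)/2) + rp q (-((n : ℝ)/2))) / 2

/-- `γ_n = (q^{n/2} - q^{-n/2})/(q^{1/2} - q^{-1/2})`. -/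
def gammaN (q : ℝ) (n : ℕ) : ℂ :=
  (rp q ((n : ℝ)/2) - rp q (-((n : ℝ)/2))) / (rp q (1/2) - rp q (-(1/2)))

/-- The monic Chebyshev polynomials of the first kind. -/
def chebM (n : ℕ) : Polynomial ℂ :=
  if n = 0 then 1 else (2 : ℂ) ^ (1 - (n : ℤ)) • Polynomial.Chebyshev.T ℂ (n : ℤ)

end

open Polynomial

theorem exists_ne_zero_xl_eq (x : ℂ) : ∃ z ≠ 0, xl z = x := by
  obtain ⟨w, hw⟩ := IsAlgClosed.exists_eq_mul_self (x ^ 2 - 1)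
  have hprod : (x + w) * (x - w) = 1 := by linear_combination hw
  have hz : x + w ≠ 0 := left_ne_zero_of_mul_eq_one hprod
  refine ⟨x + w, hz, ?_⟩
  rw [xl, inv_eq_of_mul_eq_one_right hprod]
  ring

theorem Polynomial.eq_of_forall_eval_xl_eq {f g : ℂ[X]}
    (h : ∀ z : ℂ, z ≠ 0 → f.eval (xl z) = g.eval (xl z)) : f = g :=
  Polynomial.funext fun x => by
    obtain ⟨z, hz, rfl⟩ := exists_ne_zero_xl_eq x
    exact h z hz

theorem rp_half_mul_rp_neg_half {q : ℝ} (hq : 0 < q) : rp q (1/2) * rp q (-(1/2)) = 1 := by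
  rw [rp, rp, ← Complex.ofReal_mul, ← Real.rpow_add hq]
  norm_num

theorem xp_add_xm (q : ℝ) (z : ℂ) : xp q z + xm q z = 2 * alphaC q * xl z := by
  unfold xp xm alphaC xl
  ring

theorem xp_sub_xm_sq {q : ℝ} (hq : 0 < q) {z : ℂ} (hz : z ≠ 0) :
    (xp q z - xm q z) ^ 2 = 4 * (alphaC q ^ 2 - 1) * (xl z ^ 2 - 1) := by
  unfold xp xm alphaC xl
  linear_combination (4 * (z * z⁻¹) - (z + z⁻¹) ^ 2) * rp_half_mul_rp_neg_half hq
    + (4 - (rp q (1/2) + rp q (-(1/2))) ^ 2) * mul_inv_cancel₀ hz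

theorem IsSq.add {q : ℝ} {f g F G : ℂ[X]} (hf : IsSq q f F) (hg : IsSq q g G) :
    IsSq q (f + g) (F + G) := fun z hz => by
  simp only [eval_add, hf z hz, hg z hz]
  ring

theorem IsSq.C_mul {q : ℝ} {f F : ℂ[X]} (hf : IsSq q f F) (a : ℂ) :
    IsSq q (C a * f) (C a * F) := fun z hz => by
  simp only [eval_mul, eval_C, hf z hz]
  ring

theorem U2_mul_Dq_eq {q : ℝ} (hq : 0 < q) {f D S T : ℂ[X]} (hD : IsDq q f D) (hS : IsSq q f S)
    (hT : IsSq q (X * f) T) :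
    C (alphaC q ^ 2 - 1) * (X ^ 2 - 1) * D = T - C (alphaC q) * X * S := by
  refine Polynomial.eq_of_forall_eval_xl_eq fun z hz => ?_
  have hT' := hT z hz
  simp only [eval_mul, eval_X] at hT'
  simp only [eval_mul, eval_sub, eval_pow, eval_C, eval_X, eval_one]
  linear_combination (-(D.eval (xl z)) / 4) * xp_sub_xm_sq hq hz
    + ((xp q z - xm q z) / 4) * hD z hz - hT'
    + alphaC q * xl z * hS z hz
    - ((f.eval (xp q z) + f.eval (xm q z)) / 4) * xp_add_xm q z

theorem U2_mul_Dq_eq_of_three_term {q : ℝ} (hq : 0 < q) {f₀ f₁ f₂ D S₀ S₁ S₂ : ℂ[X]} {b c : ℂ}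
    (hrec : X * f₁ = f₂ + C b * f₁ + C c * f₀) (hD : IsDq q f₁ D)
    (hS₀ : IsSq q f₀ S₀) (hS₁ : IsSq q f₁ S₁) (hS₂ : IsSq q f₂ S₂) :
    C (alphaC q ^ 2 - 1) * (X ^ 2 - 1) * D = S₂ + (C b - C (alphaC q) * X) * S₁ + C c * S₀ := by
  have hT : IsSq q (X * f₁) (S₂ + C b * S₁ + C c * S₀) := by
    rw [hrec]
    exact ((hS₂.add (hS₁.C_mul b)).add (hS₀.C_mul c))
  rw [U2_mul_Dq_eq hq hD hS₁ hT]
  ring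

theorem stmt0_general (q : ℝ) (hq0 : 0 < q)
    (P : ℕ → Polynomial ℂ) (B C : ℕ → ℂ)
    (hrec : ∀ n : ℕ, Polynomial.X * P (n + 1) =
      P (n + 2) + Polynomial.C (B (n + 1)) * P (n + 1) + Polynomial.C (C (n + 1)) * P n)
    (a c : ℂ) (sa sb sc : ℕ → ℂ)
    (SP : ℕ → Polynomial ℂ) (hSP : ∀ n, IsSq q (P n) (SP n))
    (hstruct : ∀ n : ℕ, (Polynomial.C a * Polynomial.X - Polynomial.C c) * SP n =
      (Polynomial.C (sa n) * Polynomial.X + Polynomial.C (sb n)) * P n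
        + Polynomial.C (sc n) * P (n - 1)) :
    ∀ n : ℕ, 2 ≤ n → ∀ Dn : Polynomial ℂ, IsDq q (P n) Dn →
      (Polynomial.C a * Polynomial.X - Polynomial.C c) *
          (Polynomial.C (alphaC q ^ 2 - 1) * (Polynomial.X ^ 2 - 1)) * Dn =
        Polynomial.C (sa (n + 1) - alphaC q * sa n) * P (n + 2)
          + Polynomial.C ((sb (n + 1) + sa (n + 1) * B (n + 1)) - alphaC q * (sb n + sa n * B n)
              + sa n * (B n - alphaC q * B (n + 1))) * P (n + 1)
          + Polynomial.C ((sc (n + 1) + sa (n + 1) * C (n + 1)) - alphaC q * (sc n + sa n * C n)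
              + (sb n + sa n * B n) * (1 - alphaC q) * B n
              + sa (n - 1) * C n - alphaC q * sa n * C (n + 1)) * P n
          + Polynomial.C (((sb (n - 1) + sa (n - 1) * B (n - 1)) - alphaC q * (sb n + sa n * B n)) * C n
              + (sc n + sa n * C n) * (B n - alphaC q * B (n - 1))) * P (n - 1)
          + Polynomial.C (C n * (sc (n - 1) + sa (n - 1) * C (n - 1))
              - alphaC q * C (n - 1) * (sc n + sa n * C n)) * P (n - 2) := by
  intro n hn Dn hDn
  obtain ⟨m, rfl⟩ : ∃ m, n = m + 2 := ⟨n - 2, by omega⟩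
  have hU2 := U2_mul_Dq_eq_of_three_term hq0 (hrec (m + 1)) hDn (hSP (m + 1)) (hSP _) (hSP _)
  have hS₁ := hstruct (m + 1)
  have hS₂ := hstruct (m + 2)
  have hS₃ := hstruct (m + 3)
  have hX₁ := hrec m
  have hX₂ := hrec (m + 1)
  have hX₃ := hrec (m + 2)
  simp only [Nat.add_sub_cancel, show m + 2 - 1 = m + 1 from rfl, show m + 3 - 1 = m + 2 from rfl,
    map_add, map_sub, map_mul, map_one]
    at hU2 hS₁ hS₂ hS₃ hX₁ hX₂ hX₃ ⊢
  set α := Polynomial.C (alphaC q)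
  linear_combination (Polynomial.C a * X - Polynomial.C c) * hU2 + hS₃
    + (Polynomial.C (B (m + 2)) - α * X) * hS₂ + Polynomial.C (C (m + 2)) * hS₁
    + (Polynomial.C (sa (m + 3)) - α * Polynomial.C (sa (m + 2))) * hX₃
    + (Polynomial.C (sa (m + 2)) * Polynomial.C (B (m + 2)) - α * Polynomial.C (sb (m + 2))
      - α * Polynomial.C (sa (m + 2)) * X
      - α * Polynomial.C (sa (m + 2)) * Polynomial.C (B (m + 2))) * hX₂
    + (Polynomial.C (C (m + 2)) * Polynomial.C (sa (m + 1)) - α * Polynomial.C (sc (m + 2))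
      - α * Polynomial.C (sa (m + 2)) * Polynomial.C (C (m + 2))) * hX₁

theorem stmt0 (q : ℝ) (hq0 : 0 < q) (hq1 : q < 1)
    (P : ℕ → Polynomial ℂ) (B C : ℕ → ℂ)
    (hmonic : ∀ n, (P n).Monic) (hdeg : ∀ n, (P n).natDegree = n)
    (hCne : ∀ n, 1 ≤ n → C n ≠ 0)
    (hrec0 : Polynomial.X * P 0 = P 1 + Polynomial.C (B 0) * P 0)
    (hrec : ∀ n : ℕ, Polynomial.X * P (n + 1) =
      P (n + 2) + Polynomial.C (B (n + 1)) * P (n + 1) + Polynomial.C (C (n + 1)) * P n)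
    (a c : ℂ) (sa sb sc : ℕ → ℂ) (hc0 : sc 0 = 0)
    (SP : ℕ → Polynomial ℂ) (hSP : ∀ n, IsSq q (P n) (SP n))
    (hstruct : ∀ n : ℕ, (Polynomial.C a * Polynomial.X - Polynomial.C c) * SP n =
      (Polynomial.C (sa n) * Polynomial.X + Polynomial.C (sb n)) * P n
        + Polynomial.C (sc n) * P (n - 1)) :
    ∀ n : ℕ, 2 ≤ n → ∀ Dn : Polynomial ℂ, IsDq q (P n) Dn →
      (Polynomial.C a * Polynomial.X - Polynomial.C c) *
          (Polynomial.C (alphaC q ^ 2 - 1) * (Polynomial.X ^ 2 - 1)) * Dn =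
        Polynomial.C (sa (n + 1) - alphaC q * sa n) * P (n + 2)
          + Polynomial.C ((sb (n + 1) + sa (n + 1) * B (n + 1)) - alphaC q * (sb n + sa n * B n)
              + sa n * (B n - alphaC q * B (n + 1))) * P (n + 1)
          + Polynomial.C ((sc (n + 1) + sa (n + 1) * C (n + 1)) - alphaC q * (sc n + sa n * C n)
              + (sb n + sa n * B n) * (1 - alphaC q) * B n
              + sa (n - 1) * C n - alphaC q * sa n * C (n + 1)) * P n
          + Polynomial.C (((sb (n - 1) + sa (n - 1) * B (n - 1)) - alphaC q * (sb n + sa n * B n)) * C n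
              + (sc n + sa n * C n) * (B n - alphaC q * B (n - 1))) * P (n - 1)
          + Polynomial.C (C n * (sc (n - 1) + sa (n - 1) * C (n - 1))
              - alphaC q * C (n - 1) * (sc n + sa n * C n)) * P (n - 2) :=
  stmt0_general q hq0 P B C hrec a c sa sb sc SP hSP hstruct
end

section
/- Let T̂_n denote the monic Chebyshev polynomials of the first kind. Then S_q T̂_n = α_n·T̂_n for every n ≥ 0; equivalently, for every nonzero z ∈ ℂ and every n ≥ 0, (T̂_n(x₊(z)) + T̂_n(x₋(z)))/2 = α_n·T̂_n(x(z)). -/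
/-! Write `z = exp w` and `q^{1/2} = exp h`. Then `x(z) = cosh w`, `x±(z) = cosh (w ± h)`,
`α_n = cosh (n h)` and `T_n (cosh w) = cosh (n w)`, so the claim for `T_n` is the addition formula
`cosh (n (w + h)) + cosh (n (w - h)) = 2 cosh (n w) cosh (n h)`; the monic normalisation is a
constant factor. -/

open Complex Polynomial

lemma rp_eq_exp {q : ℝ} (hq : 0 < q) (r : ℝ) : rp q r = exp (r * Real.log q) := by
  rw [rp, Real.rpow_def_of_pos hq, ofReal_exp]
  push_cast
  ring_nf

lemma xl_exp (w : ℂ) : xl (exp w) = cosh w := by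
  rw [xl, cosh, exp_neg]

lemma xp_exp {q : ℝ} (hq : 0 < q) (w : ℂ) : xp q (exp w) = cosh (w + Real.log q / 2) := by
  rw [xp, cosh, rp_eq_exp hq, rp_eq_exp hq, ← exp_neg, ← exp_add, ← exp_add]
  push_cast
  ring_nf

lemma xm_exp {q : ℝ} (hq : 0 < q) (w : ℂ) : xm q (exp w) = cosh (w - Real.log q / 2) := by
  rw [xm, cosh, rp_eq_exp hq, rp_eq_exp hq, ← exp_neg, ← exp_add, ← exp_add]
  push_cast
  ring_nf

lemma alphaN_eq_cosh {q : ℝ} (hq : 0 < q) (n : ℕ) : alphaN q n = cosh (n * (Real.log q / 2)) := by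
  rw [alphaN, cosh, rp_eq_exp hq, rp_eq_exp hq]
  push_cast
  ring_nf

lemma IsSq.smul {q : ℝ} {f g : ℂ[X]} (h : IsSq q f g) (c : ℂ) : IsSq q (c • f) (c • g) := by
  intro z hz
  simp only [eval_smul, smul_eq_mul, h z hz]
  ring

lemma isSq_chebyshev_T {q : ℝ} (hq : 0 < q) (n : ℕ) :
    IsSq q (Chebyshev.T ℂ n) (C (alphaN q n) * Chebyshev.T ℂ n) := by
  intro z hz
  rw [← exp_log hz, eval_mul, eval_C, xl_exp, xp_exp hq, xm_exp hq, alphaN_eq_cosh hq,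
    Chebyshev.T_complex_cosh, Chebyshev.T_complex_cosh, Chebyshev.T_complex_cosh]
  push_cast
  rw [mul_add, mul_sub, cosh_add, cosh_sub]
  ring

lemma chebM_eq_smul (n : ℕ) : ∃ c : ℂ, chebM n = c • Chebyshev.T ℂ n := by
  by_cases hn : n = 0
  · exact ⟨1, by simp [chebM, hn]⟩
  · exact ⟨_, if_neg hn⟩

theorem stmt9_general (q : ℝ) (hq0 : 0 < q) :
    ∀ n : ℕ, IsSq q (chebM n) (Polynomial.C (alphaN q n) * chebM n) := by
  intro n
  obtain ⟨c, hc⟩ := chebM_eq_smul n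
  rw [hc, mul_smul_comm]
  exact (isSq_chebyshev_T hq0 n).smul c

theorem stmt9 (q : ℝ) (hq0 : 0 < q) (hq1 : q < 1) :
    ∀ n : ℕ, IsSq q (chebM n) (Polynomial.C (alphaN q n) * chebM n) :=
  stmt9_general q hq0
end

section
/- Fix s ∈ {1, −1}. Define the monic Al-Salam–Chihara polynomials Q_n = Q_n(x; s, s q^{1/2} | q) by Q_{−1} = 0, Q_0 = 1 and Q_{n+1} = (X − B_n)·Q_n − C_n·Q_{n−1}, where B_n = (s/2)(1 + q^{1/2})·q^n and C_n = (1/4)(1 − q^n)(1 − q^{n−1/2}). Then for every n ≥ 0: S_q Q_n = α_n·Q_n + c_n·Q_{n−1}, where c_n = s(1 − q^n)(1 − q^{n−1/2})/(4 q^{n/2}) (so c_0 = 0). -/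
noncomputable section

/-- Recurrence coefficient `B_n` of the monic Al-Salam--Chihara polynomials
`Q_n(x; s, s q^{1/2} | q)`. -/
def ascB (q : ℝ) (s : ℂ) (n : ℕ) : ℂ := s/2 * (1 + rp q (1/2)) * rp q (n : ℝ)

/-- Recurrence coefficient `C_n` of the monic Al-Salam--Chihara polynomials. -/
def ascC (q : ℝ) (n : ℕ) : ℂ := 1/4 * (1 - rp q (n : ℝ)) * (1 - rp q ((n : ℝ) - 1/2))

/-- The monic Al-Salam--Chihara polynomials `Q_n(x; s, s q^{1/2} | q)` (with `Q_{-1} = 0`). -/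
noncomputable def ascQ (q : ℝ) (s : ℂ) : ℕ → Polynomial ℂ
  | 0 => 1
  | 1 => Polynomial.X - Polynomial.C (ascB q s 0)
  | (n + 2) => (Polynomial.X - Polynomial.C (ascB q s (n + 1))) * ascQ q s (n + 1)
      - Polynomial.C (ascC q (n + 1)) * ascQ q s n

/-- The coefficient `c_n` in the structure relation for Al-Salam--Chihara polynomials. -/
def ascc (q : ℝ) (s : ℂ) (n : ℕ) : ℂ :=
  s * (1 - rp q (n : ℝ)) * (1 - rp q ((n : ℝ) - 1/2)) / (4 * rp q ((n : ℝ)/2))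

end

/-!
Write `p = q^{1/2}` and `w = -s`, and let `H_N` be the homogeneous Rogers–Szegő polynomials
(`rogersSzego p w N`). Two steps of their three-term recurrence, together with
`w² = 1`, give one step of the recurrence of `Q_n`, so `(2z)^n Q_n(x(z)) = H_{2n}(z)`. Since
`x₊(z) = x(pz)` and `x₋(z) = x(z/p)`, the claim becomes an identity between `H_{2n}(pz)`,
`H_{2n}(z/p)`, `H_{2n}(z)` and `H_{2n-2}(z)`, which follows from the two `p`-Pascal rules
`H_{N+1}(z) = z H_N(z) + w H_N(pz) = w H_N(z) + p^N z H_N(z/p)`.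
-/

/-- The homogeneous Rogers–Szegő polynomial `∑ⱼ [N choose j]_p z^(N-j) w^j`, defined through
the `p`-Pascal rule. -/
def rogersSzego (p w : ℂ) : ℕ → ℂ → ℂ
  | 0, _ => 1
  | N + 1, z => z * rogersSzego p w N z + w * rogersSzego p w N (p * z)

section RogersSzego

variable {p w : ℂ}

theorem rogersSzego_succ (N : ℕ) (z : ℂ) :
    rogersSzego p w (N + 1) z = z * rogersSzego p w N z + w * rogersSzego p w N (p * z) :=
  rfl

theorem rogersSzego_succ' (hp : p ≠ 0) (N : ℕ) (z : ℂ) :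
    rogersSzego p w (N + 1) z =
      w * rogersSzego p w N z + p ^ N * z * rogersSzego p w N (z / p) := by
  induction N generalizing z with
  | zero => simp only [rogersSzego]; ring
  | succ N ih =>
    rw [rogersSzego_succ (N + 1), rogersSzego_succ N (z / p), mul_div_cancel₀ _ hp, ih (p * z),
      mul_div_cancel_left₀ _ hp]
    linear_combination (norm := skip) z * ih z - w * rogersSzego_succ N z
    field_simp
    ring

theorem rogersSzego_add_two (hp : p ≠ 0) (N : ℕ) (z : ℂ) :
    rogersSzego p w (N + 2) z =
      (z + w) * rogersSzego p w (N + 1) z - (1 - p ^ (N + 1)) * w * z * rogersSzego p w N z := by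
  have h := rogersSzego_succ' (w := w) hp N (p * z)
  rw [mul_div_cancel_left₀ _ hp] at h
  linear_combination rogersSzego_succ (p := p) (w := w) (N + 1) z + w * h
    - w * rogersSzego_succ (p := p) (w := w) N z

theorem rogersSzego_add_four (hp : p ≠ 0) (N : ℕ) (z : ℂ) :
    rogersSzego p w (N + 4) z =
      (z ^ 2 + w ^ 2 + (p ^ (N + 2) + p ^ (N + 3)) * w * z) * rogersSzego p w (N + 2) z
        - (1 - p ^ (N + 2)) * (1 - p ^ (N + 1)) * w ^ 2 * z ^ 2 * rogersSzego p w N z := by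
  linear_combination rogersSzego_add_two (w := w) hp (N + 2) z
    + (z + w) * rogersSzego_add_two (w := w) hp (N + 1) z
    + (1 - p ^ (N + 2)) * w * z * rogersSzego_add_two (w := w) hp N z

theorem rogersSzego_mul_add_div (hp : p ≠ 0) (hw : w ≠ 0) {z : ℂ} (hz : z ≠ 0) (N : ℕ) :
    rogersSzego p w (N + 2) (p * z) + p ^ (N + 2) * rogersSzego p w (N + 2) (z / p) =
      (1 + p ^ (N + 2)) * rogersSzego p w (N + 2) z
        - (1 - p ^ (N + 2)) * (1 - p ^ (N + 1)) * w * z * rogersSzego p w N z := by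
  refine mul_left_cancel₀ (mul_ne_zero hw hz) ?_
  linear_combination -z * rogersSzego_succ (p := p) (w := w) (N + 2) z
    - w * rogersSzego_succ' (w := w) hp (N + 2) z
    + (z + w) * rogersSzego_add_two (w := w) hp (N + 1) z
    + (1 - p ^ (N + 2)) * w * z * rogersSzego_add_two (w := w) hp N z

end RogersSzego

section AlSalamChihara

open Polynomial

variable {q : ℝ}

theorem rp_eq_pow (hq : 0 < q) (r : ℝ) (m : ℕ) (h : r = m / 2) : rp q r = rp q (1 / 2) ^ m := by
  rw [rp, rp, ← Complex.ofReal_pow, ← Real.rpow_natCast, ← Real.rpow_mul hq.le, h]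
  congr 2
  ring

theorem rp_neg (hq : 0 < q) (r : ℝ) : rp q (-r) = (rp q r)⁻¹ := by
  rw [rp, rp, Real.rpow_neg hq.le, Complex.ofReal_inv]

theorem rp_ne_zero (hq : 0 < q) (r : ℝ) : rp q r ≠ 0 :=
  Complex.ofReal_ne_zero.mpr (Real.rpow_pos_of_pos hq r).ne'

theorem xp_eq (hq : 0 < q) (z : ℂ) : xp q z = xl (rp q (1 / 2) * z) := by
  rw [xp, xl, rp_neg hq, mul_inv]

theorem xm_eq (hq : 0 < q) (z : ℂ) : xm q z = xl (z / rp q (1 / 2)) := by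
  rw [xm, xl, rp_neg hq, inv_div]
  ring

theorem alphaN_eq (hq : 0 < q) (n : ℕ) :
    alphaN q n = (rp q (1 / 2) ^ n + (rp q (1 / 2) ^ n)⁻¹) / 2 := by
  rw [alphaN, rp_neg hq, rp_eq_pow hq _ n rfl]

theorem ascc_succ_eq (hq : 0 < q) (s : ℂ) (n : ℕ) :
    ascc q s (n + 1) = s * (1 - rp q (1 / 2) ^ (2 * n + 2))
      * (1 - rp q (1 / 2) ^ (2 * n + 1)) / (4 * rp q (1 / 2) ^ (n + 1)) := by
  rw [ascc, rp_eq_pow hq ((n + 1 : ℕ) : ℝ) (2 * n + 2) (by push_cast; ring),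
    rp_eq_pow hq (((n + 1 : ℕ) : ℝ) - 1 / 2) (2 * n + 1) (by push_cast; ring),
    rp_eq_pow hq _ (n + 1) rfl]

theorem ascB_eq (hq : 0 < q) (s : ℂ) (n : ℕ) :
    ascB q s n = s / 2 * (1 + rp q (1 / 2)) * rp q (1 / 2) ^ (2 * n) := by
  rw [ascB, rp_eq_pow hq (n : ℝ) (2 * n) (by push_cast; ring)]

theorem ascC_succ_eq (hq : 0 < q) (n : ℕ) :
    ascC q (n + 1) =
      1 / 4 * (1 - rp q (1 / 2) ^ (2 * n + 2)) * (1 - rp q (1 / 2) ^ (2 * n + 1)) := by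
  rw [ascC, rp_eq_pow hq ((n + 1 : ℕ) : ℝ) (2 * n + 2) (by push_cast; ring),
    rp_eq_pow hq (((n + 1 : ℕ) : ℝ) - 1 / 2) (2 * n + 1) (by push_cast; ring)]

theorem two_mul_pow_mul_eval_ascQ (hq : 0 < q) {s : ℂ} (hs : s ^ 2 = 1) {z : ℂ} (hz : z ≠ 0) :
    ∀ n : ℕ, (2 * z) ^ n * (ascQ q s n).eval (xl z) = rogersSzego (rp q (1 / 2)) (-s) (2 * n) z
  | 0 => by simp [ascQ, rogersSzego]
  | 1 => by
    simp only [ascQ, rogersSzego, ascB_eq hq, eval_sub, eval_X, eval_C, xl]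
    field_simp
    linear_combination -hs
  | n + 2 => by
    have ih0 := two_mul_pow_mul_eval_ascQ hq hs hz n
    have ih1 := two_mul_pow_mul_eval_ascQ hq hs hz (n + 1)
    have hx : 2 * z * xl z = z ^ 2 + 1 := by
      rw [xl]
      field_simp
    rw [show 2 * (n + 1) = 2 * n + 2 by ring] at ih1
    rw [show 2 * (n + 2) = 2 * n + 4 by ring, rogersSzego_add_four (rp_ne_zero hq _)]
    simp only [ascQ, eval_sub, eval_mul, eval_X, eval_C, ascB_eq hq, ascC_succ_eq hq]
    set p := rp q (1 / 2)
    linear_combination 2 * z * (xl z - s / 2 * (1 + p) * p ^ (2 * (n + 1))) * ih1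
      - z ^ 2 * (1 - p ^ (2 * n + 2)) * (1 - p ^ (2 * n + 1)) * ih0
      + rogersSzego p (-s) (2 * n + 2) z * hx
      - (rogersSzego p (-s) (2 * n + 2) z
        - z ^ 2 * (1 - p ^ (2 * n + 2)) * (1 - p ^ (2 * n + 1)) * rogersSzego p (-s) (2 * n) z) * hs

theorem eval_ascQ_xl (hq : 0 < q) {s : ℂ} (hs : s ^ 2 = 1) {z : ℂ} (hz : z ≠ 0) (n : ℕ) :
    (ascQ q s n).eval (xl z) = rogersSzego (rp q (1 / 2)) (-s) (2 * n) z / (2 * z) ^ n :=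
  eq_div_of_mul_eq (pow_ne_zero n (mul_ne_zero two_ne_zero hz)) <| by
    rw [mul_comm]
    exact two_mul_pow_mul_eval_ascQ hq hs hz n

end AlSalamChihara

theorem stmt10_general (q : ℝ) (hq0 : 0 < q) (s : ℂ) (hs : s = 1 ∨ s = -1) :
    ∀ n : ℕ, IsSq q (ascQ q s n)
      (Polynomial.C (alphaN q n) * ascQ q s n + Polynomial.C (ascc q s n) * ascQ q s (n - 1)) := by
  have hs2 : s ^ 2 = 1 := by rcases hs with rfl | rfl <;> norm_num
  intro n z hz
  rcases n with _ | m
  · simp [ascQ, alphaN, ascc, rp]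
  have hp := rp_ne_zero hq0 (1 / 2)
  have hw : -s ≠ 0 := fun h ↦ by simp [neg_eq_zero.mp h] at hs2
  rw [Polynomial.eval_add, Polynomial.eval_mul, Polynomial.eval_mul, Polynomial.eval_C,
    Polynomial.eval_C, xp_eq hq0, xm_eq hq0, Nat.add_sub_cancel, alphaN_eq hq0, ascc_succ_eq hq0,
    eval_ascQ_xl hq0 hs2 hz, eval_ascQ_xl hq0 hs2 hz, eval_ascQ_xl hq0 hs2 (mul_ne_zero hp hz),
    eval_ascQ_xl hq0 hs2 (div_ne_zero hz hp), show 2 * (m + 1) = 2 * m + 2 by ring]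
  simp only [mul_pow, div_pow]
  field_simp
  linear_combination -4 * 2 ^ m * z ^ m * rogersSzego_mul_add_div hp hw hz (2 * m)

theorem stmt10 (q : ℝ) (hq0 : 0 < q) (hq1 : q < 1) (s : ℂ) (hs : s = 1 ∨ s = -1) :
    ∀ n : ℕ, IsSq q (ascQ q s n)
      (Polynomial.C (alphaN q n) * ascQ q s n + Polynomial.C (ascc q s n) * ascQ q s (n - 1)) :=
  stmt10_general q hq0 s hs
end
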